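/- Let p be a nonzero projection in a finite-dimensional C*-algebra B₀₀ sitting in a commuting square B₀₀ ⊆ B₀₁, B₁₀ ⊆ B₁₁ (with faithful normalized trace tr on B₁₁). Then the compressed square pB₀₀p ⊆ pB₀₁p, pB₁₀p ⊆ pB₁₁p, with the normalized trace tr(p·)/tr(p) on pB₁₁p, is again a commuting square. -/
import Mathlib


def IsCondExp {B : Type*} [NormedRing B] [StarRing B] [CStarRing B]
    [NormedAlgebra ℂ B] [StarModule ℂ B]
    (tr : B →ₗ[ℂ] ℂ) (A : StarSubalgebra ℂ B) (E : B →ₗ[ℂ] B) : Prop :=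
  (∀ x : B, E x ∈ A) ∧ (∀ a ∈ A, E a = a) ∧
    ∀ a ∈ A, ∀ b : B, tr (a * b) = tr (a * E b)

/-- `F` is the trace-preserving conditional expectation of the compressed
algebra `pB₁₁p` onto the compressed subalgebra `pXp` (whose underlying set is
`S`), with respect to the normalized trace `x ↦ tr x / tr p` on `pB₁₁p`. -/
def IsCompressedCondExp {B : Type*} [NormedRing B] [StarRing B] [CStarRing B]
    [NormedAlgebra ℂ B] [StarModule ℂ B]
    (tr : B →ₗ[ℂ] ℂ) (p : B) (S : Set B) (F : B →ₗ[ℂ] B) : Prop :=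
  (∀ x : B, F (p * x * p) ∈ S) ∧ (∀ y ∈ S, F y = y) ∧
    ∀ y ∈ S, ∀ x : B,
      tr (y * (p * x * p)) / tr p = tr (y * F (p * x * p)) / tr p

/-- Auxiliary: a compressed conditional expectation is given by compressing
the original conditional expectation: `F (p x p) = p (E x) p`. -/
lemma compress_condExp_eq {B : Type*} [NormedRing B] [StarRing B]
    [CStarRing B] [NormedAlgebra ℂ B] [StarModule ℂ B]
    (tr : B →ₗ[ℂ] ℂ)
    (htr_tracial : ∀ x y : B, tr (x * y) = tr (y * x))
    (htr_faithful : ∀ x : B, tr (star x * x) = 0 → x = 0)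
    (A : StarSubalgebra ℂ B) (E F : B →ₗ[ℂ] B)
    (p : B) (hp : p ∈ A) (hpproj : p * p = p) (hpsa : star p = p)
    (htrp : tr p ≠ 0)
    (hE : IsCondExp tr A E)
    (hF : IsCompressedCondExp tr p {y : B | ∃ x ∈ A, y = p * x * p} F) :
    ∀ x : B, F (p * x * p) = p * E x * p := by
  obtain ⟨hEmem, hEid, hEtr⟩ := hE
  obtain ⟨hFmem, hFid, hFtr⟩ := hF
  -- key trace identity: tr ((p b p) (p z p)) = tr ((p b p) z)
  have key : ∀ b z : B, tr (p * b * p * (p * z * p)) = tr (p * b * p * z) := by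
    intro b z
    have hpl : ∀ X : B, p * (p * X) = p * X := by
      intro X; rw [← mul_assoc, hpproj]
    have h1 : p * b * p * (p * z * p) = p * b * p * z * p := by
      simp only [mul_assoc, hpl]
    have h2 : p * (p * b * p * z) = p * b * p * z := by
      simp only [mul_assoc, hpl]
    rw [h1, htr_tracial (p * b * p * z) p, h2]
  intro x
  obtain ⟨a, ha, haeq⟩ := hFmem x
  -- trace identity against all elements of the compressed subalgebra
  have main : ∀ b ∈ A, tr (p * b * p * F (p * x * p)) =
      tr (p * b * p * (p * E x * p)) := by
    intro b hb
    have hmem : (p : B) * b * p ∈ A := mul_mem (mul_mem hp hb) hp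
    have h2 : tr (p * b * p * (p * x * p)) / tr p =
        tr (p * b * p * F (p * x * p)) / tr p :=
      hFtr (p * b * p) ⟨b, hb, rfl⟩ x
    have h3 : tr (p * b * p * (p * x * p)) =
        tr (p * b * p * F (p * x * p)) := by
      field_simp at h2; exact h2
    rw [← h3, key b x, hEtr _ hmem x, ← key b (E x)]
  -- the difference is p c p with c = a - E x ∈ A
  set c : B := a - E x with hc
  have hcA : c ∈ A := sub_mem ha (hEmem x)
  have hd : F (p * x * p) - p * E x * p = p * c * p := by
    rw [haeq, hc]; noncomm_ring
  have hstar : star (p * c * p) = p * star c * p := by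
    rw [star_mul, star_mul, hpsa, mul_assoc]
  have hzero : tr (star (p * c * p) * (p * c * p)) = 0 := by
    have hmain := main (star c) (star_mem hcA)
    have : tr (p * star c * p * (F (p * x * p) - p * E x * p)) = 0 := by
      rw [mul_sub, map_sub, hmain, sub_self]
    rw [hstar, ← hd]
    exact this
  have : p * c * p = 0 := htr_faithful _ hzero
  have := hd.trans this
  exact sub_eq_zero.mp this

/-- compressing a commuting square by a nonzero projection
`p ∈ B₀₀` and normalizing the trace yields again a commuting square
`pB₀₀p ⊆ pB₀₁p, pB₁₀p ⊆ pB₁₁p`. -/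
theorem compressed_commuting_square {B : Type*} [NormedRing B] [StarRing B]
    [CStarRing B] [NormedAlgebra ℂ B] [StarModule ℂ B] [FiniteDimensional ℂ B]
    (tr : B →ₗ[ℂ] ℂ)
    (htr_one : tr 1 = 1)
    (htr_tracial : ∀ x y : B, tr (x * y) = tr (y * x))
    (htr_pos : ∀ x : B, 0 ≤ (tr (star x * x)).re ∧ (tr (star x * x)).im = 0)
    (htr_faithful : ∀ x : B, tr (star x * x) = 0 → x = 0)
    (B00 B01 B10 : StarSubalgebra ℂ B)
    (h0001 : B00 ≤ B01) (h0010 : B00 ≤ B10)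
    (E00 E01 E10 : B →ₗ[ℂ] B)
    (hE00 : IsCondExp tr B00 E00) (hE01 : IsCondExp tr B01 E01)
    (hE10 : IsCondExp tr B10 E10)
    (hcs : ∀ x : B, E01 (E10 x) = E00 x)
    (p : B) (hp : p ∈ B00) (hpproj : p * p = p) (hpsa : star p = p)
    (hpne : p ≠ 0)
    (F00 F01 F10 : B →ₗ[ℂ] B)
    (hF00 : IsCompressedCondExp tr p {y : B | ∃ x ∈ B00, y = p * x * p} F00)
    (hF01 : IsCompressedCondExp tr p {y : B | ∃ x ∈ B01, y = p * x * p} F01)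
    (hF10 : IsCompressedCondExp tr p {y : B | ∃ x ∈ B10, y = p * x * p} F10) :
    ∀ x : B, F01 (F10 (p * x * p)) = F00 (p * x * p) := by
  have htrp : tr p ≠ 0 := by
    intro h
    apply hpne
    apply htr_faithful
    rw [hpsa, hpproj, h]
  have h00 := compress_condExp_eq tr htr_tracial htr_faithful B00 E00 F00 p
    hp hpproj hpsa htrp hE00 hF00
  have h01 := compress_condExp_eq tr htr_tracial htr_faithful B01 E01 F01 p
    (h0001 hp) hpproj hpsa htrp hE01 hF01
  have h10 := compress_condExp_eq tr htr_tracial htr_faithful B10 E10 F10 p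
    (h0010 hp) hpproj hpsa htrp hE10 hF10
  intro x
  rw [h10 x, h01 (E10 x), hcs, h00 x]
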